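/- arXiv:2605.30496 — 5 statements merged into one kernel-verified Lean document; each statement's English description precedes it below -/
import Mathlib

section
/- Let n be a positive integer and y an integer with 0 ≤ y ≤ n. Then the marginal probability mass function of Y, given by p(y) = ∫₀¹ C(n,y) w^y (1-w)^{n-y} (-ln w) dw, equals (n!/y!) · Σ_{k=0}^{n-y} [(-1)^k / (k! (n-y-k)!)] · 1/(y+1+k)². -/
/-!
Expanding `(1 - w) ^ (n - y)` binomially reduces the integral to the moments
`∫₀¹ w ^ m (-log w) dw = 1 / (m + 1) ^ 2`, which come from the primitive
`w ^ (m + 1) / (m + 1) ^ 2 - w ^ (m + 1) log w / (m + 1)`. The remaining coefficient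
`C(n, y) C(n - y, k)` is the multinomial `n! / (y! k! (n - y - k)!)`.
-/

open MeasureTheory intervalIntegral Real Finset Nat

lemma intervalIntegrable_pow_mul_neg_log (m : ℕ) (a b : ℝ) :
    IntervalIntegrable (fun w : ℝ => w ^ m * -log w) volume a b :=
  intervalIntegrable_log'.neg.continuousOn_mul (continuousOn_pow m)

lemma integral_pow_mul_neg_log (m : ℕ) :
    ∫ w in (0:ℝ)..1, w ^ m * -log w = 1 / ((m : ℝ) + 1) ^ 2 := by
  set c : ℝ := m + 1 with hc
  have hc0 : c ≠ 0 := by positivity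
  -- Written with `w * log w`, the primitive is continuous at `0` (where `log` has a junk value).
  let F : ℝ → ℝ := fun w => w ^ (m + 1) / c ^ 2 - w ^ m * (w * log w) / c
  have hF : Continuous F := by
    have := continuous_mul_log
    fun_prop
  have hF' : ∀ w ∈ Set.Ioo (0:ℝ) 1, HasDerivAt F (w ^ m * -log w) w := by
    intro w hw
    have hpow : (m : ℝ) * w ^ (m - 1) * w = m * w ^ m := by
      rcases m with _ | m <;> simp [pow_succ, mul_assoc]
    refine (((hasDerivAt_pow (m + 1) w).div_const (c ^ 2)).sub
      (((hasDerivAt_pow m w).mul (hasDerivAt_mul_log hw.1.ne')).div_const c)).congr_deriv ?_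
    field_simp
    rw [hpow, hc]
    push_cast
    ring
  rw [integral_eq_sub_of_hasDerivAt_of_le zero_le_one hF.continuousOn hF'
    (intervalIntegrable_pow_mul_neg_log m 0 1)]
  simp [F]

lemma integral_pow_mul_one_sub_pow_mul_neg_log (y N : ℕ) :
    ∫ w in (0:ℝ)..1, w ^ y * (1 - w) ^ N * -log w
      = ∑ k ∈ range (N + 1), (-1 : ℝ) ^ k * N.choose k / ((y : ℝ) + k + 1) ^ 2 := by
  have hexpand : ∀ w : ℝ, w ^ y * (1 - w) ^ N * -log w
      = ∑ k ∈ range (N + 1), (-1 : ℝ) ^ k * N.choose k * (w ^ (y + k) * -log w) := by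
    intro w
    rw [sub_eq_neg_add, add_pow, mul_sum, sum_mul]
    refine sum_congr rfl fun k _ => ?_
    rw [neg_pow, pow_add]
    ring
  simp_rw [hexpand]
  rw [integral_finsetSum fun k _ => (intervalIntegrable_pow_mul_neg_log _ 0 1).const_mul _]
  refine sum_congr rfl fun k _ => ?_
  rw [intervalIntegral.integral_const_mul, integral_pow_mul_neg_log]
  push_cast
  ring

lemma cast_choose_mul_choose_sub {K : Type*} [Field K] [CharZero K] {n y k : ℕ} (hy : y ≤ n)
    (hk : k ≤ n - y) :
    (n.choose y * (n - y).choose k : K) = n ! / y ! / (k ! * (n - y - k)!) := by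
  have : ((n - y)! : K) ≠ 0 := Nat.cast_ne_zero.mpr (factorial_ne_zero _)
  rw [cast_choose K hy, cast_choose K hk]
  field_simp

theorem marginal_pmf_alternating_sum_general (n y : ℕ) (hy : y ≤ n) :
    ∫ w in (0:ℝ)..1,
        (n.choose y : ℝ) * w ^ y * (1 - w) ^ (n - y) * (-Real.log w)
      = (Nat.factorial n : ℝ) / (Nat.factorial y : ℝ) *
          ∑ k ∈ Finset.range (n - y + 1),
            (-1 : ℝ) ^ k /
                ((Nat.factorial k : ℝ) * (Nat.factorial (n - y - k) : ℝ)) *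
              (1 / ((y : ℝ) + 1 + (k : ℝ)) ^ 2) := by
  simp_rw [mul_assoc (n.choose y : ℝ)]
  rw [intervalIntegral.integral_const_mul, integral_pow_mul_one_sub_pow_mul_neg_log, mul_sum,
    mul_sum]
  refine sum_congr rfl fun k hk => ?_
  have hcoeff := cast_choose_mul_choose_sub (K := ℝ) hy (Nat.lt_succ_iff.mp (mem_range.mp hk))
  linear_combination (-1 : ℝ) ^ k / ((y : ℝ) + k + 1) ^ 2 * hcoeff

theorem marginal_pmf_alternating_sum (n y : ℕ) (hn : 0 < n) (hy : y ≤ n) :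
    ∫ w in (0:ℝ)..1,
        (n.choose y : ℝ) * w ^ y * (1 - w) ^ (n - y) * (-Real.log w)
      = (Nat.factorial n : ℝ) / (Nat.factorial y : ℝ) *
          ∑ k ∈ Finset.range (n - y + 1),
            (-1 : ℝ) ^ k /
                ((Nat.factorial k : ℝ) * (Nat.factorial (n - y - k) : ℝ)) *
              (1 / ((y : ℝ) + 1 + (k : ℝ)) ^ 2) :=
  marginal_pmf_alternating_sum_general n y hy
end

section
/- Let n be a positive integer and y an integer with 0 ≤ y ≤ n. Then the marginal probability mass function p(y) = ∫₀¹ C(n,y) w^y (1-w)^{n-y} (-ln w) dw equals (H_{n+1} - H_y)/(n+1), where H_m = Σ_{j=1}^m 1/j is the m-th harmonic number (with H₀ = 0). -/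
/-!
With `G a b = ∫₀¹ w^a (1-w)^b (-log w) dw`, splitting `(1-w)^(b+1) = (1-w)^b - w (1-w)^b` gives
`G a (b+1) = G a b - G (a+1) b`, and `G a 0 = 1/(a+1)^2` by an explicit antiderivative. Induction
on `b` then yields `G a b = a! b! / (a+b+1)! * (H (a+b+1) - H a)`, and
`C(n,y) * y! (n-y)! / (n+1)! = 1/(n+1)`.
-/

/-- `H m` is the `m`-th harmonic number, with `H 0 = 0`. -/
noncomputable def H (m : ℕ) : ℝ := ∑ j ∈ Finset.range m, 1 / ((j : ℝ) + 1)

open MeasureTheory intervalIntegral Real Set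
open scoped Nat

lemma H_succ (m : ℕ) : H (m + 1) = H m + 1 / ((m : ℝ) + 1) := by
  simp [H, Finset.sum_range_succ]

noncomputable def logBetaIntegral (a b : ℕ) : ℝ :=
  ∫ w in (0:ℝ)..1, w ^ a * (1 - w) ^ b * (-log w)

lemma intervalIntegrable_pow_mul_one_sub_pow_mul_neg_log (a b : ℕ) :
    IntervalIntegrable (fun w : ℝ => w ^ a * (1 - w) ^ b * (-log w)) volume 0 1 :=
  intervalIntegrable_log'.neg.continuousOn_mul (by fun_prop)

lemma logBetaIntegral_zero (a : ℕ) : logBetaIntegral a 0 = 1 / ((a : ℝ) + 1) ^ 2 := by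
  set F : ℝ → ℝ := fun w => w ^ (a + 1) / ((a : ℝ) + 1) ^ 2 - w ^ (a + 1) * log w / (a + 1)
  have hF : ContinuousOn F (Icc 0 1) := by
    -- continuity at `0` comes from that of `w * log w`
    have : F = fun w => w ^ (a + 1) / ((a : ℝ) + 1) ^ 2 - w ^ a * (w * log w) / (a + 1) := by
      funext w; ring
    rw [this]
    exact (by fun_prop : Continuous _).continuousOn
  have hF' : ∀ x ∈ Ioo (0:ℝ) 1, HasDerivAt F (x ^ a * (-log x)) x := by
    intro x hx
    have hx0 : x ≠ 0 := hx.1.ne'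
    have := ((hasDerivAt_pow (a + 1) x).div_const (((a : ℝ) + 1) ^ 2)).sub
      (((hasDerivAt_pow (a + 1) x).mul (hasDerivAt_log hx0)).div_const ((a : ℝ) + 1))
    refine this.congr_deriv ?_
    simp only [Nat.add_sub_cancel, Nat.cast_add, Nat.cast_one]
    field_simp
    ring
  have hint : IntervalIntegrable (fun w : ℝ => w ^ a * (-log w)) volume 0 1 :=
    intervalIntegrable_log'.neg.continuousOn_mul (by fun_prop)
  simp only [logBetaIntegral, pow_zero, mul_one]
  rw [integral_eq_sub_of_hasDerivAt_of_le zero_le_one hF hF' hint]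
  simp [F]

lemma logBetaIntegral_succ (a b : ℕ) :
    logBetaIntegral a (b + 1) = logBetaIntegral a b - logBetaIntegral (a + 1) b := by
  rw [logBetaIntegral, logBetaIntegral, logBetaIntegral, ← integral_sub
    (intervalIntegrable_pow_mul_one_sub_pow_mul_neg_log a b)
    (intervalIntegrable_pow_mul_one_sub_pow_mul_neg_log (a + 1) b)]
  congr 1 with w
  ring

lemma logBetaIntegral_eq (a b : ℕ) :
    logBetaIntegral a b = a ! * b ! / (a + b + 1)! * (H (a + b + 1) - H a) := by
  induction b generalizing a with
  | zero =>
    rw [logBetaIntegral_zero, Nat.add_zero, H_succ, Nat.factorial_succ]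
    push_cast
    field_simp
    ring
  | succ b ih =>
    rw [logBetaIntegral_succ, ih, ih, show a + 1 + b + 1 = a + b + 1 + 1 by ring,
      show a + (b + 1) + 1 = a + b + 1 + 1 by ring, H_succ (a + b + 1), H_succ a,
      Nat.factorial_succ (a + b + 1), Nat.factorial_succ a, Nat.factorial_succ b]
    push_cast
    field_simp
    ring

theorem marginal_pmf_harmonic_general (n y : ℕ) (hy : y ≤ n) :
    ∫ w in (0:ℝ)..1,
        (n.choose y : ℝ) * w ^ y * (1 - w) ^ (n - y) * (-Real.log w)
      = (H (n + 1) - H y) / ((n : ℝ) + 1) := by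
  simp_rw [mul_assoc, intervalIntegral.integral_const_mul, ← mul_assoc]
  rw [← logBetaIntegral, logBetaIntegral_eq, Nat.add_sub_cancel' hy, Nat.cast_choose ℝ hy,
    Nat.factorial_succ]
  push_cast
  field_simp

theorem marginal_pmf_harmonic (n y : ℕ) (hn : 0 < n) (hy : y ≤ n) :
    ∫ w in (0:ℝ)..1,
        (n.choose y : ℝ) * w ^ y * (1 - w) ^ (n - y) * (-Real.log w)
      = (H (n + 1) - H y) / ((n : ℝ) + 1) :=
  marginal_pmf_harmonic_general n y hy
end

section
/- Let n be a positive integer and y an integer with 0 ≤ y ≤ n. Then (n!/y!) · Σ_{k=0}^{n-y} [(-1)^k / (k! (n-y-k)!)] · 1/(y+1+k)² = (H_{n+1} - H_y)/(n+1), where H_m = Σ_{j=1}^m 1/j is the m-th harmonic number (with H₀ = 0). -/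
/-!
With `m = n - y` and `1 / (k! (m-k)!) = C(m,k) / m!`, the sum is `(-1)^m / m!` times the `m`-th
forward difference of `t ↦ 1/t²` at `x = y + 1`. That difference is
`(-1)^m m! (∑_{j ≤ m} 1/(x+j)) / x(x+1)⋯(x+m)`, by induction on `m`: passing from `x` to `x + 1`
the rising factorial loses the factor `x` and gains `x + m + 1`, and the sum of reciprocals
changes by the same two terms. At `x = y + 1` the rising factorial is `(n+1)!/y!` and the sum
of reciprocals is `H (n+1) - H y`.
-/

open Finset Polynomial Nat

theorem ascPochhammer_succ_eval_left {S : Type*} [CommSemiring S] (n : ℕ) (x : S) :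
    (ascPochhammer S (n + 1)).eval x = x * (ascPochhammer S n).eval (x + 1) := by
  simp [ascPochhammer_succ_left, eval_comp]

theorem factorial_mul_ascPochhammer_eval_add_one {S : Type*} [Semiring S] (y k : ℕ) :
    (y ! : S) * (ascPochhammer S k).eval ((y : S) + 1) = ((y + k) ! : S) := by
  rw [← Nat.cast_succ, ascPochhammer_nat_eq_natCast_ascFactorial, ← Nat.cast_mul,
    factorial_mul_ascFactorial]

theorem sum_range_one_div_add_one_add {K : Type*} [DivisionRing K] (n : ℕ) (x : K) :
    ∑ j ∈ range (n + 1), 1 / (x + 1 + j) = ∑ j ∈ range (n + 2), 1 / (x + j) - 1 / x := by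
  rw [sum_range_succ' _ (n + 1)]
  simp [add_assoc, add_comm (1 : K)]

theorem sum_range_neg_one_pow_mul_choose_mul {R : Type*} [CommRing R] (f : R → R) (n : ℕ)
    (x : R) :
    ∑ k ∈ range (n + 1), (-1) ^ k * n.choose k * f (x + k) = (-1) ^ n * (fwdDiff 1)^[n] f x := by
  rw [fwdDiff_iter_eq_sum_shift, mul_sum]
  refine sum_congr rfl fun k hk ↦ ?_
  obtain ⟨d, rfl⟩ := Nat.exists_eq_add_of_le (Nat.le_of_lt_succ (mem_range.mp hk))
  have hsq : ((-1 : R) ^ d) * (-1) ^ d = 1 := by rw [← pow_add, Even.neg_one_pow ⟨d, rfl⟩]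
  simp only [Nat.add_sub_cancel_left, zsmul_eq_mul, nsmul_eq_mul, mul_one, pow_add]
  push_cast
  linear_combination (-(-1) ^ k * ((k + d).choose k) * f (x + k)) * hsq

section

variable {𝕜 : Type*} [Field 𝕜] [LinearOrder 𝕜] [IsStrictOrderedRing 𝕜]

theorem fwdDiff_iter_one_div_sq (n : ℕ) {x : 𝕜} (hx : 0 < x) :
    (fwdDiff 1)^[n] (fun t : 𝕜 ↦ 1 / t ^ 2) x
      = (-1) ^ n * n ! * (∑ j ∈ range (n + 1), 1 / (x + j)) / (ascPochhammer 𝕜 (n + 1)).eval x := by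
  induction n generalizing x with
  | zero => simp [sq, div_eq_mul_inv]
  | succ n ih =>
    have hP := ascPochhammer_succ_eval (n + 1) x
    have hP_shift : (ascPochhammer 𝕜 (n + 1)).eval (x + 1)
        = (ascPochhammer 𝕜 (n + 1)).eval x * (x + (n + 1 : ℕ)) / x := by
      rw [← hP, ascPochhammer_succ_eval_left (n + 1) x, mul_div_cancel_left₀ _ hx.ne']
    have := ascPochhammer_pos (n + 1) x hx
    rw [Function.iterate_succ_apply', fwdDiff, ih hx, ih (by positivity), hP_shift, hP,
      sum_range_one_div_add_one_add, sum_range_succ _ (n + 1), factorial_succ]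
    push_cast
    field_simp
    ring

theorem sum_range_alternating_choose_div_sq (n : ℕ) {x : 𝕜} (hx : 0 < x) :
    ∑ k ∈ range (n + 1), (-1) ^ k * n.choose k * (1 / (x + k) ^ 2)
      = n ! * (∑ j ∈ range (n + 1), 1 / (x + j)) / (ascPochhammer 𝕜 (n + 1)).eval x := by
  rw [sum_range_neg_one_pow_mul_choose_mul (fun t ↦ 1 / t ^ 2), fwdDiff_iter_one_div_sq n hx,
    ← mul_div_assoc, ← mul_assoc, ← mul_assoc, ← pow_add, Even.neg_one_pow ⟨n, rfl⟩, one_mul]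

end

theorem H_add_sub_H (y m : ℕ) : H (y + m) - H y = ∑ j ∈ range m, 1 / ((y : ℝ) + 1 + j) := by
  rw [H, H, sum_range_add, add_sub_cancel_left]
  refine sum_congr rfl fun j _ ↦ ?_
  push_cast
  ring

theorem alternating_sum_eq_harmonic_general (n y : ℕ) (hy : y ≤ n) :
    (Nat.factorial n : ℝ) / (Nat.factorial y : ℝ) *
        ∑ k ∈ Finset.range (n - y + 1),
          (-1 : ℝ) ^ k /
              ((Nat.factorial k : ℝ) * (Nat.factorial (n - y - k) : ℝ)) *
            (1 / ((y : ℝ) + 1 + (k : ℝ)) ^ 2)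
      = (H (n + 1) - H y) / ((n : ℝ) + 1) := by
  obtain ⟨m, rfl⟩ := Nat.exists_eq_add_of_le hy
  rw [Nat.add_sub_cancel_left]
  have hterm : ∀ k ∈ range (m + 1),
      (-1 : ℝ) ^ k / ((k ! : ℝ) * ((m - k) ! : ℝ)) * (1 / ((y : ℝ) + 1 + k) ^ 2)
        = (-1) ^ k * m.choose k * (1 / ((y + 1 : ℝ) + k) ^ 2) / m ! := by
    intro k hk
    rw [Nat.cast_choose ℝ (Nat.le_of_lt_succ (mem_range.mp hk))]
    field_simp
  have hP : (ascPochhammer ℝ (m + 1)).eval ((y : ℝ) + 1) = (y + (m + 1)) ! / y ! := by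
    rw [← factorial_mul_ascPochhammer_eval_add_one y, mul_div_cancel_left₀ _ (by positivity)]
  rw [sum_congr rfl hterm, ← sum_div, sum_range_alternating_choose_div_sq m (by positivity),
    ← H_add_sub_H, hP, ← add_assoc, factorial_succ]
  push_cast
  field_simp

theorem alternating_sum_eq_harmonic (n y : ℕ) (hn : 0 < n) (hy : y ≤ n) :
    (Nat.factorial n : ℝ) / (Nat.factorial y : ℝ) *
        ∑ k ∈ Finset.range (n - y + 1),
          (-1 : ℝ) ^ k /
              ((Nat.factorial k : ℝ) * (Nat.factorial (n - y - k) : ℝ)) *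
            (1 / ((y : ℝ) + 1 + (k : ℝ)) ^ 2)
      = (H (n + 1) - H y) / ((n : ℝ) + 1) :=
  alternating_sum_eq_harmonic_general n y hy
end

section
/- Let n be a positive integer and y an integer with 0 ≤ y ≤ n. For every p₂ ∈ (0,1), ∫₀¹ p₁^y (1 - p₁ p₂)^{n-y} dp₁ = y! (n-y)! Σ_{k=0}^{n-y} p₂^{k} (1-p₂)^{n-y-k} / ((n-y-k)! (y+k+1)!). -/
/-! Writing `1 - x p = p (1 - x) + (1 - p)` and expanding binomially turns the integrand into a
combination of `x ^ y (1 - x) ^ k`, whose integrals are the Beta values `y! k! / (y + k + 1)!`. -/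

open Nat Finset

theorem integral_pow_mul_one_sub_pow (a b : ℕ) :
    ∫ x in (0:ℝ)..1, x ^ a * (1 - x) ^ b = (a ! * b ! / (a + b + 1)! : ℝ) := by
  have h := Complex.betaIntegral_eq_Gamma_mul_div (a + 1) (b + 1)
    (by norm_cast; omega) (by norm_cast; omega)
  rw [show (a + 1 : ℂ) + (b + 1) = ↑(a + b + 1) + 1 by push_cast; ring] at h
  simp only [Complex.betaIntegral, add_sub_cancel_right, Complex.cpow_natCast,
    Complex.Gamma_nat_eq_factorial] at h
  rw [← Complex.ofReal_inj, ← intervalIntegral.integral_ofReal]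
  push_cast at h ⊢
  exact h

theorem pow_mul_one_sub_mul_pow_eq_sum (x p : ℝ) (y m : ℕ) :
    x ^ y * (1 - x * p) ^ m =
      ∑ k ∈ range (m + 1), m.choose k * p ^ k * (1 - p) ^ (m - k) * (x ^ y * (1 - x) ^ k) := by
  rw [show 1 - x * p = p * (1 - x) + (1 - p) by ring, add_pow, mul_sum]
  refine sum_congr rfl fun k _ => ?_
  rw [mul_pow]
  ring

theorem integral_pow_mul_one_sub_mul_pow (p : ℝ) (y m : ℕ) :
    ∫ x in (0:ℝ)..1, x ^ y * (1 - x * p) ^ m =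
      (y ! * m ! : ℝ) * ∑ k ∈ range (m + 1),
        p ^ k * (1 - p) ^ (m - k) / ((m - k)! * (y + k + 1)! : ℝ) := by
  simp_rw [pow_mul_one_sub_mul_pow_eq_sum]
  rw [intervalIntegral.integral_finsetSum fun k _ =>
    (Continuous.intervalIntegrable (by fun_prop) 0 1), mul_sum]
  refine sum_congr rfl fun k hk => ?_
  have hkm : k ≤ m := Nat.lt_succ_iff.mp (mem_range.mp hk)
  rw [intervalIntegral.integral_const_mul, integral_pow_mul_one_sub_pow, cast_choose ℝ hkm]
  field_simp

theorem conditional_normalization_const_general (n y : ℕ) (p2 : ℝ) :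
    ∫ p1 in (0:ℝ)..1, p1 ^ y * (1 - p1 * p2) ^ (n - y)
      = (Nat.factorial y : ℝ) * (Nat.factorial (n - y) : ℝ) *
          ∑ k ∈ Finset.range (n - y + 1),
            p2 ^ k * (1 - p2) ^ (n - y - k) /
              ((Nat.factorial (n - y - k) : ℝ) * (Nat.factorial (y + k + 1) : ℝ)) :=
  integral_pow_mul_one_sub_mul_pow p2 y (n - y)

theorem conditional_normalization_const (n y : ℕ) (hn : 0 < n) (hy : y ≤ n)
    (p2 : ℝ) (hp2 : p2 ∈ Set.Ioo (0:ℝ) 1) :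
    ∫ p1 in (0:ℝ)..1, p1 ^ y * (1 - p1 * p2) ^ (n - y)
      = (Nat.factorial y : ℝ) * (Nat.factorial (n - y) : ℝ) *
          ∑ k ∈ Finset.range (n - y + 1),
            p2 ^ k * (1 - p2) ^ (n - y - k) /
              ((Nat.factorial (n - y - k) : ℝ) * (Nat.factorial (y + k + 1) : ℝ)) :=
  conditional_normalization_const_general n y p2
end

section
/- Fix α ∈ (0,1). With E(p₂ | Y = y) = (n-y+1)/((n+2)(H_{n+1} - H_y)) denoting the posterior expectation of p₂ given Y = y in the model with sample size n, one has lim_{n→∞} E(p₂ | Y = ⌊αn⌋) = (1-α)/(-ln α). -/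
/-!
Both harmonic numbers are `log m + γ + o(1)`, so the Euler–Mascheroni constants cancel in
`H (n + 1) - H ⌊a n⌋` and leave `log ((n + 1) / ⌊a n⌋) → -log a`. Dividing numerator and
denominator by `n + 2` turns the posterior mean into `(1 - a + o(1)) / (-log a + o(1))`.
-/

open Filter Topology Real

lemma H_eq_harmonic (m : ℕ) : H m = harmonic m := by
  simp [H, harmonic, one_div]

lemma tendsto_natCast_atTop_of_tendsto_div {u : ℕ → ℕ} {α : ℝ} (hα : 0 < α)
    (hu : Tendsto (fun n ↦ (u n : ℝ) / n) atTop (𝓝 α)) : Tendsto u atTop atTop := by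
  rw [← tendsto_natCast_atTop_iff (R := ℝ)]
  refine (Tendsto.pos_mul_atTop hα hu tendsto_natCast_atTop_atTop).congr' ?_
  filter_upwards [eventually_ne_atTop 0] with n hn
  field_simp

lemma tendsto_div_natCast_add {f : ℕ → ℝ} {α : ℝ} (x : ℝ)
    (hf : Tendsto (fun n ↦ f n / n) atTop (𝓝 α)) :
    Tendsto (fun n ↦ f n / (n + x)) atTop (𝓝 α) := by
  refine (mul_one α ▸ hf.mul (tendsto_natCast_div_add_atTop x)).congr' ?_
  filter_upwards [eventually_ne_atTop 0] with n hn
  field_simp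

theorem tendsto_harmonic_sub_harmonic {u v : ℕ → ℕ} {α β : ℝ} (hα : 0 < α) (hβ : 0 < β)
    (hu : Tendsto (fun n ↦ (u n : ℝ) / n) atTop (𝓝 α))
    (hv : Tendsto (fun n ↦ (v n : ℝ) / n) atTop (𝓝 β)) :
    Tendsto (fun n ↦ (harmonic (u n) : ℝ) - harmonic (v n)) atTop (𝓝 (log (α / β))) := by
  have hu_top := tendsto_natCast_atTop_of_tendsto_div hα hu
  have hv_top := tendsto_natCast_atTop_of_tendsto_div hβ hv
  have hlog : Tendsto (fun n ↦ log ((u n : ℝ) / v n)) atTop (𝓝 (log (α / β))) := by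
    refine ((hu.div hv hβ.ne').log (div_pos hα hβ).ne').congr' ?_
    filter_upwards [eventually_ne_atTop 0] with n hn
    rw [Pi.div_apply, div_div_div_cancel_right₀ (Nat.cast_ne_zero.2 hn : (n : ℝ) ≠ 0)]
  have hγ := ((tendsto_harmonic_sub_log.comp hu_top).sub
    (tendsto_harmonic_sub_log.comp hv_top)).add hlog
  rw [sub_self, zero_add] at hγ
  refine hγ.congr' ?_
  filter_upwards [hu_top.eventually_ne_atTop 0, hv_top.eventually_ne_atTop 0] with n hun hvn
  simp only [Function.comp_apply]
  rw [log_div (Nat.cast_ne_zero.2 hun) (Nat.cast_ne_zero.2 hvn)]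
  ring

theorem posterior_expectation_limit (a : ℝ) (ha : a ∈ Set.Ioo (0:ℝ) 1) :
    Filter.Tendsto
      (fun n : ℕ =>
        ((n : ℝ) - (⌊a * n⌋₊ : ℝ) + 1) /
          (((n : ℝ) + 2) * (H (n + 1) - H ⌊a * n⌋₊)))
      Filter.atTop (nhds ((1 - a) / (-Real.log a))) := by
  obtain ⟨ha0, ha1⟩ := ha
  have hfloor : Tendsto (fun n : ℕ ↦ (⌊a * n⌋₊ : ℝ) / n) atTop (𝓝 a) :=
    (tendsto_nat_floor_mul_div_atTop ha0.le).comp tendsto_natCast_atTop_atTop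
  have hinv : Tendsto (fun n : ℕ ↦ 1 / (n : ℝ)) atTop (𝓝 0) :=
    tendsto_one_div_atTop_nhds_zero_nat
  have hsucc : Tendsto (fun n : ℕ ↦ ((n + 1 : ℕ) : ℝ) / n) atTop (𝓝 1) := by
    refine (add_zero (1 : ℝ) ▸ tendsto_const_nhds.add hinv).congr' ?_
    filter_upwards [eventually_ne_atTop 0] with n hn
    field_simp
    push_cast
    ring
  have hH : Tendsto (fun n : ℕ ↦ H (n + 1) - H ⌊a * n⌋₊) atTop (𝓝 (-log a)) := by
    simpa [H_eq_harmonic] using tendsto_harmonic_sub_harmonic one_pos ha0 hsucc hfloor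
  have hnum : Tendsto (fun n : ℕ ↦ ((n : ℝ) - ⌊a * n⌋₊ + 1) / (n + 2)) atTop (𝓝 (1 - a)) := by
    refine tendsto_div_natCast_add 2 ((add_zero (1 - a) ▸
      (tendsto_const_nhds.sub hfloor).add hinv).congr' ?_)
    filter_upwards [eventually_ne_atTop 0] with n hn
    field_simp
  simp_rw [← div_div]
  exact hnum.div hH (neg_ne_zero.2 (log_neg ha0 ha1).ne)
end
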